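/- arXiv:1001.4461 — 5 statements merged into one kernel-verified Lean document; each statement's English description precedes it below -/
import Mathlib

section
/- For every real κ > 0, the function u_κ(θ) = sin θ · (cos θ + √(cos²θ + κ²)) is differentiable on ℝ and satisfies, for all θ, the identity u_κ′(θ) · sin θ · √(cos²θ + κ²) = u_κ(θ) · cos 2θ + (κ²/2) · sin 2θ. (That is, along the flow θ̇ = sin θ √(cos²θ + κ²), the multiplier λ_θ = u_κ(θ) satisfies the adjoint equation λ̇_θ = λ_θ cos 2θ + λ_a sin 2θ with λ_a = κ²/2.) -/
/-!
Writing `c = cos θ`, `s = sin θ` and `R = √(c² + κ²)`, the derivative of `u_κ` is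
`c (c + R) - s² (1 + c / R)`, so `u_κ'(θ) · s R = s (c + R) (c R - s²)`. This differs from
`u_κ · cos 2θ + (κ²/2) sin 2θ = s (c + R) (c² - s²) + κ² s c` by `s c (R² - c² - κ²) = 0`.
-/

open Real

lemma cos_sq_add_sq_pos {κ : ℝ} (hκ : κ ≠ 0) (θ : ℝ) : 0 < cos θ ^ 2 + κ ^ 2 := by
  positivity

lemma hasDerivAt_sqrt_cos_sq_add_sq {κ : ℝ} (hκ : κ ≠ 0) (θ : ℝ) :
    HasDerivAt (fun θ ↦ √(cos θ ^ 2 + κ ^ 2)) (-(sin θ * cos θ) / √(cos θ ^ 2 + κ ^ 2)) θ := by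
  have h := (((hasDerivAt_cos θ).fun_pow 2).add_const (κ ^ 2)).sqrt (cos_sq_add_sq_pos hκ θ).ne'
  convert h using 1
  field_simp
  ring

lemma hasDerivAt_sin_mul_cos_add_sqrt {κ : ℝ} (hκ : κ ≠ 0) (θ : ℝ) :
    HasDerivAt (fun θ ↦ sin θ * (cos θ + √(cos θ ^ 2 + κ ^ 2)))
      (cos θ * (cos θ + √(cos θ ^ 2 + κ ^ 2))
        - sin θ ^ 2 * (1 + cos θ / √(cos θ ^ 2 + κ ^ 2))) θ := by
  refine ((hasDerivAt_sin θ).mul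
    ((hasDerivAt_cos θ).add (hasDerivAt_sqrt_cos_sq_add_sq hκ θ))).congr_deriv ?_
  simp only [Pi.add_apply]
  ring

lemma adjoint_identity {s c R κ : ℝ} (hR : R ≠ 0) (hR2 : R ^ 2 = c ^ 2 + κ ^ 2) :
    (c * (c + R) - s ^ 2 * (1 + c / R)) * (s * R)
      = s * (c + R) * (c ^ 2 - s ^ 2) + κ ^ 2 / 2 * (2 * s * c) := by
  field_simp
  linear_combination s * c * hR2

theorem stmt_1 (κ : ℝ) (hκ : 0 < κ) :
    Differentiable ℝ
      (fun θ : ℝ => Real.sin θ * (Real.cos θ + Real.sqrt (Real.cos θ ^ 2 + κ ^ 2))) ∧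
    ∀ θ : ℝ,
      deriv (fun θ : ℝ => Real.sin θ * (Real.cos θ + Real.sqrt (Real.cos θ ^ 2 + κ ^ 2))) θ
          * (Real.sin θ * Real.sqrt (Real.cos θ ^ 2 + κ ^ 2))
        = Real.sin θ * (Real.cos θ + Real.sqrt (Real.cos θ ^ 2 + κ ^ 2)) * Real.cos (2 * θ)
          + κ ^ 2 / 2 * Real.sin (2 * θ) := by
  have hderiv := hasDerivAt_sin_mul_cos_add_sqrt hκ.ne'
  refine ⟨fun θ ↦ (hderiv θ).differentiableAt, fun θ ↦ ?_⟩
  have hpos := cos_sq_add_sq_pos hκ.ne' θ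
  rw [(hderiv θ).deriv, cos_two_mul', sin_two_mul]
  exact adjoint_identity (sqrt_pos.2 hpos).ne' (sq_sqrt hpos.le)
end

section
/- For every real κ > 0, the function r_κ(θ) = (cos θ + √(cos²θ + κ²)) / (1 + √(1 + κ²)) is positive and differentiable on ℝ, satisfies r_κ(0) = 1, and satisfies the logarithmic-derivative identity r_κ′(θ)/r_κ(θ) = −sin θ / √(cos²θ + κ²) for all θ. (Thus a = ln r_κ solves da/dθ = −sin θ / √(cos²θ + κ²) with a(0) = 0.) -/
/-! Since `d/dx (x + √(x² + κ²)) = (x + √(x² + κ²)) / √(x² + κ²)`, the numerator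
`cos θ + √(cos² θ + κ²)` has logarithmic derivative `-sin θ / √(cos² θ + κ²)`. It is positive
because `√(x² + κ²) > |x|` for `κ ≠ 0`, and the constant denominator only normalises the value
at `θ = 0`. -/

open Real

lemma sqrt_sq_add_sq_pos {x κ : ℝ} (hκ : κ ≠ 0) : 0 < √(x ^ 2 + κ ^ 2) :=
  sqrt_pos.2 (by positivity)

lemma add_sqrt_sq_add_sq_pos {x κ : ℝ} (hκ : κ ≠ 0) : 0 < x + √(x ^ 2 + κ ^ 2) := by
  have hlt : |x| < √(x ^ 2 + κ ^ 2) := by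
    rw [← sqrt_sq_eq_abs]
    exact sqrt_lt_sqrt (sq_nonneg x) (by simpa using pow_pos (abs_pos.2 hκ) 2)
  linarith [neg_abs_le x]

lemma HasDerivAt.add_sqrt_sq_add_sq {f : ℝ → ℝ} {f' x κ : ℝ} (hf : HasDerivAt f f' x)
    (hκ : κ ≠ 0) :
    HasDerivAt (fun y => f y + √(f y ^ 2 + κ ^ 2))
      (f' * (f x + √(f x ^ 2 + κ ^ 2)) / √(f x ^ 2 + κ ^ 2)) x := by
  have hs := sqrt_sq_add_sq_pos (x := f x) hκ
  have hsq : HasDerivAt (fun y => f y ^ 2 + κ ^ 2) (2 * f x * f') x := by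
    simpa using (hf.pow 2).add_const (κ ^ 2)
  refine (hf.add (hsq.sqrt (sqrt_pos.1 hs).ne')).congr_deriv ?_
  field_simp
  ring

theorem stmt_2 (κ : ℝ) (hκ : 0 < κ) :
    (∀ θ : ℝ, 0 < (Real.cos θ + Real.sqrt (Real.cos θ ^ 2 + κ ^ 2))
        / (1 + Real.sqrt (1 + κ ^ 2))) ∧
    Differentiable ℝ
      (fun θ : ℝ => (Real.cos θ + Real.sqrt (Real.cos θ ^ 2 + κ ^ 2))
        / (1 + Real.sqrt (1 + κ ^ 2))) ∧
    (Real.cos 0 + Real.sqrt (Real.cos (0 : ℝ) ^ 2 + κ ^ 2)) / (1 + Real.sqrt (1 + κ ^ 2)) = 1 ∧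
    ∀ θ : ℝ,
      deriv (fun θ : ℝ => (Real.cos θ + Real.sqrt (Real.cos θ ^ 2 + κ ^ 2))
          / (1 + Real.sqrt (1 + κ ^ 2))) θ
        / ((Real.cos θ + Real.sqrt (Real.cos θ ^ 2 + κ ^ 2)) / (1 + Real.sqrt (1 + κ ^ 2)))
      = -Real.sin θ / Real.sqrt (Real.cos θ ^ 2 + κ ^ 2) := by
  have hκ₀ : κ ≠ 0 := hκ.ne'
  have hnum (θ : ℝ) := add_sqrt_sq_add_sq_pos (x := cos θ) hκ₀
  have hden : 0 < 1 + √(1 + κ ^ 2) := by positivity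
  have hderiv (θ : ℝ) := ((hasDerivAt_cos θ).add_sqrt_sq_add_sq hκ₀).div_const (1 + √(1 + κ ^ 2))
  refine ⟨fun θ => div_pos (hnum θ) hden, fun θ => (hderiv θ).differentiableAt, ?_, fun θ => ?_⟩
  · rw [cos_zero, one_pow]
    exact div_self hden.ne'
  · rw [(hderiv θ).deriv]
    field_simp [(hnum θ).ne']
end

section
/- For every real κ > 0, the definite integral ∫₀^π sin θ · (cos θ + √(cos²θ + κ²))² / (2·√(cos²θ + κ²)) dθ equals √(1 + κ²). Consequently, if κ = 2√(r)/(1 − r) with 0 < r < 1, the integral equals (1 + r)/(1 − r). -/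
/-!
The integrand has the elementary primitive `G θ = -cos θ (cos θ + √(cos² θ + κ²)) / 2`, so the
integral over `[0, π]` is `G π - G 0 = (√(1 + κ²) - 1) / 2 + (√(1 + κ²) + 1) / 2 = √(1 + κ²)`.
For `κ = 2√r / (1 - r)` one has `1 + κ² = ((1 + r) / (1 - r))²`.
-/

open Real

lemma hasDerivAt_neg_cos_mul_cos_add_sqrt {κ : ℝ} (hκ : κ ≠ 0) (θ : ℝ) :
    HasDerivAt (fun θ => -(cos θ * (cos θ + √(cos θ ^ 2 + κ ^ 2))) / 2)
      (sin θ * (cos θ + √(cos θ ^ 2 + κ ^ 2)) ^ 2 / (2 * √(cos θ ^ 2 + κ ^ 2))) θ := by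
  have hpos : 0 < cos θ ^ 2 + κ ^ 2 := by positivity
  have hc := hasDerivAt_cos θ
  have hq : HasDerivAt (fun θ => √(cos θ ^ 2 + κ ^ 2))
      (2 * cos θ * -sin θ / (2 * √(cos θ ^ 2 + κ ^ 2))) θ := by
    simpa using ((hc.pow 2).add_const (κ ^ 2)).sqrt hpos.ne'
  refine ((hc.fun_mul (hc.fun_add hq)).fun_neg.div_const 2).congr_deriv ?_
  field_simp
  nlinarith [sq_sqrt hpos.le, sin_sq_add_cos_sq θ]

theorem integral_sin_mul_cos_add_sqrt_sq_div {κ : ℝ} (hκ : κ ≠ 0) :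
    ∫ θ in (0 : ℝ)..π, sin θ * (cos θ + √(cos θ ^ 2 + κ ^ 2)) ^ 2 / (2 * √(cos θ ^ 2 + κ ^ 2))
      = √(1 + κ ^ 2) := by
  have hcont : Continuous fun θ =>
      sin θ * (cos θ + √(cos θ ^ 2 + κ ^ 2)) ^ 2 / (2 * √(cos θ ^ 2 + κ ^ 2)) :=
    Continuous.div (by fun_prop) (by fun_prop) fun θ => by positivity
  rw [intervalIntegral.integral_eq_sub_of_hasDerivAt
    (fun θ _ => hasDerivAt_neg_cos_mul_cos_add_sqrt hκ θ) (hcont.intervalIntegrable 0 π)]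
  simp only [cos_pi, cos_zero]
  ring_nf

lemma sqrt_one_add_sq_two_sqrt_div_one_sub {r : ℝ} (hr : 0 ≤ r) (hr1 : r < 1) :
    √(1 + (2 * √r / (1 - r)) ^ 2) = (1 + r) / (1 - r) := by
  have h1r : 0 < 1 - r := by linarith
  have hsq : 1 + (2 * √r / (1 - r)) ^ 2 = ((1 + r) / (1 - r)) ^ 2 := by
    field_simp
    rw [sq_sqrt hr]
    ring
  rw [hsq, sqrt_sq (by positivity)]

theorem stmt_5 (κ : ℝ) (hκ : 0 < κ) :
    (∫ θ in (0:ℝ)..Real.pi,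
        Real.sin θ * (Real.cos θ + Real.sqrt (Real.cos θ ^ 2 + κ ^ 2)) ^ 2
          / (2 * Real.sqrt (Real.cos θ ^ 2 + κ ^ 2)))
      = Real.sqrt (1 + κ ^ 2) ∧
    ∀ r : ℝ, 0 < r → r < 1 → κ = 2 * Real.sqrt r / (1 - r) →
      (∫ θ in (0:ℝ)..Real.pi,
          Real.sin θ * (Real.cos θ + Real.sqrt (Real.cos θ ^ 2 + κ ^ 2)) ^ 2
            / (2 * Real.sqrt (Real.cos θ ^ 2 + κ ^ 2)))
        = (1 + r) / (1 - r) := by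
  have hint := integral_sin_mul_cos_add_sqrt_sq_div hκ.ne'
  refine ⟨hint, fun r hr hr1 hκr => ?_⟩
  rw [hint, hκr, sqrt_one_add_sq_two_sqrt_div_one_sub hr.le hr1]
end

section
/- Let m > 1/2, κ ≥ 0, and θ ∈ (0, π). Then sin θ · (cos θ + √(cos²θ + κ²)) = m if and only if cot²θ − (2/m)·cot θ + 1 − κ²/m² = 0. -/
/-!
Writing `s = sin θ`, `c = cos θ`, the equation says `s √(c² + κ²) = m - s c`. Since
`s c = sin (2θ) / 2 ≤ 1/2 < m`, the right-hand side is positive, so squaring is reversible;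
after cancelling `s² c²` and using `s² + c² = 1`, dividing by `m² s²` gives the quadratic in `cot θ`.
-/

open Real

lemma mul_add_sqrt_eq_iff {s c t m : ℝ} (hs : 0 ≤ s) (hsc : s * c < m) :
    s * (c + √t) = m ↔ s ^ 2 * t = (m - s * c) ^ 2 := by
  have hsqrt : s * √t = √(s ^ 2 * t) := by
    rw [sqrt_mul (sq_nonneg s), sqrt_sq hs]
  calc s * (c + √t) = m ↔ √(s ^ 2 * t) = m - s * c := by
        rw [mul_add, hsqrt, eq_sub_iff_add_eq']
    _ ↔ s ^ 2 * t = (m - s * c) ^ 2 := by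
        rw [sqrt_eq_iff_mul_self_eq_of_pos (by linarith), eq_comm, ← sq]

lemma Real.sin_mul_cos_le_half (θ : ℝ) : sin θ * cos θ ≤ 1 / 2 := by
  linarith [sin_two_mul θ, sin_le_one (2 * θ)]

lemma sin_sq_mul_eq_sub_sq_iff_cot {θ m κ : ℝ} (hs : sin θ ≠ 0) (hm : m ≠ 0) :
    sin θ ^ 2 * (cos θ ^ 2 + κ ^ 2) = (m - sin θ * cos θ) ^ 2 ↔
      cot θ ^ 2 - (2 / m) * cot θ + 1 - κ ^ 2 / m ^ 2 = 0 := by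
  have hpyth := sin_sq_add_cos_sq θ
  rw [cot_eq_cos_div_sin]
  field_simp
  constructor <;> intro h <;> linear_combination m ^ 2 * hpyth - h

theorem stmt_9_general (m : ℝ) (hm : 1 / 2 < m) (κ : ℝ)
    (θ : ℝ) (hθ : θ ∈ Set.Ioo 0 Real.pi) :
    Real.sin θ * (Real.cos θ + Real.sqrt (Real.cos θ ^ 2 + κ ^ 2)) = m ↔
      Real.cot θ ^ 2 - (2 / m) * Real.cot θ + 1 - κ ^ 2 / m ^ 2 = 0 := by
  have hs : 0 < sin θ := sin_pos_of_pos_of_lt_pi hθ.1 hθ.2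
  have hsc : sin θ * cos θ < m := (sin_mul_cos_le_half θ).trans_lt hm
  rw [mul_add_sqrt_eq_iff hs.le hsc]
  exact sin_sq_mul_eq_sub_sq_iff_cot hs.ne' (by linarith)

theorem stmt_9 (m : ℝ) (hm : 1 / 2 < m) (κ : ℝ) (hκ : 0 ≤ κ)
    (θ : ℝ) (hθ : θ ∈ Set.Ioo 0 Real.pi) :
    Real.sin θ * (Real.cos θ + Real.sqrt (Real.cos θ ^ 2 + κ ^ 2)) = m ↔
      Real.cot θ ^ 2 - (2 / m) * Real.cot θ + 1 - κ ^ 2 / m ^ 2 = 0 :=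
  stmt_9_general m hm κ θ hθ
end

section
/- Let m > 1/2 and κ ≥ 0 with κ² > m² − 1, and set x_± = (1 ± √(κ² − m² + 1))/m. Then for every θ ∈ (0, π) with x_− < cot θ < x_+, the strict inequality sin θ · (cos θ + √(cos²θ + κ²)) > m holds. -/
/-! Writing `s = sin θ`, `c = cos θ` and `r = √(κ² - m² + 1)`, the hypothesis on `cot θ = c / s`
says `|m c - s| < r s`. Squaring and using `s² + c² = 1` gives `m² < κ² s² + 2 m s c`, which is
exactly `(m - s c)² < s² (c² + κ²)`; since `s c ≤ 1/2 < m`, taking square roots gives the claim. -/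

open Real

lemma sq_mul_sub_lt_of_div_mem_Ioo {m r s c : ℝ} (hm : 0 < m) (hs : 0 < s)
    (h₁ : (1 - r) / m < c / s) (h₂ : c / s < (1 + r) / m) :
    (m * c - s) ^ 2 < (r * s) ^ 2 := by
  rw [div_lt_div_iff₀ hm hs] at h₁
  rw [div_lt_div_iff₀ hs hm] at h₂
  exact sq_lt_sq' (by linarith) (by linarith)

lemma lt_mul_add_sqrt_of_sq_lt {m κ s c : ℝ} (hs : 0 ≤ s) (hsc : s * c < m)
    (h : m ^ 2 < s ^ 2 * κ ^ 2 + 2 * m * s * c) :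
    m < s * (c + √(c ^ 2 + κ ^ 2)) := by
  have hroot : m - s * c < √(s ^ 2 * (c ^ 2 + κ ^ 2)) :=
    (lt_sqrt (by linarith)).2 (by linarith)
  rw [sqrt_mul (sq_nonneg s), sqrt_sq hs] at hroot
  linarith

theorem stmt_11_general (m : ℝ) (hm : 1 / 2 < m) (κ : ℝ)
    (hκm : m ^ 2 - 1 < κ ^ 2) (θ : ℝ) (hθ : θ ∈ Set.Ioo 0 Real.pi)
    (h₁ : (1 - Real.sqrt (κ ^ 2 - m ^ 2 + 1)) / m < Real.cot θ)
    (h₂ : Real.cot θ < (1 + Real.sqrt (κ ^ 2 - m ^ 2 + 1)) / m) :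
    m < Real.sin θ * (Real.cos θ + Real.sqrt (Real.cos θ ^ 2 + κ ^ 2)) := by
  have hs : 0 < sin θ := sin_pos_of_pos_of_lt_pi hθ.1 hθ.2
  rw [cot_eq_cos_div_sin] at h₁ h₂
  have hquad := sq_mul_sub_lt_of_div_mem_Ioo (by linarith) hs h₁ h₂
  rw [mul_pow, sq_sqrt (by linarith)] at hquad
  have hsc : sin θ * cos θ ≤ 1 / 2 := by
    have := sin_le_one (2 * θ)
    rw [sin_two_mul] at this
    linarith
  refine lt_mul_add_sqrt_of_sq_lt hs.le (by linarith) ?_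
  linear_combination hquad - m ^ 2 * sin_sq_add_cos_sq θ

theorem stmt_11 (m : ℝ) (hm : 1 / 2 < m) (κ : ℝ) (hκ : 0 ≤ κ)
    (hκm : m ^ 2 - 1 < κ ^ 2) (θ : ℝ) (hθ : θ ∈ Set.Ioo 0 Real.pi)
    (h₁ : (1 - Real.sqrt (κ ^ 2 - m ^ 2 + 1)) / m < Real.cot θ)
    (h₂ : Real.cot θ < (1 + Real.sqrt (κ ^ 2 - m ^ 2 + 1)) / m) :
    m < Real.sin θ * (Real.cos θ + Real.sqrt (Real.cos θ ^ 2 + κ ^ 2)) :=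
  stmt_11_general m hm κ hκm θ hθ h₁ h₂
end
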